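/- Let t > d/2 and q ≥ 1. With w = (−Δ)^{-t} Σ_{j∈J_q} y_j δ(·−x_j) (a mean-zero function on 𝕋^d) and w_h its truncation to frequencies in B_{q−1}^d, there exists C depending only on d, δ such that for all t ∈ [d/2+δ,1/δ] and y ∈ ℝ^{J_q}: ‖w − w_h‖_t² ≤ C 2^{-q(2t−d)} |y|². -/

import Mathlib

open scoped BigOperators

/-- Euclidean norm of a lattice point `m ∈ ℤ^d`. -/
noncomputable def latticeEnorm {d : ℕ} (m : Fin d → ℤ) : ℝ :=
  Real.sqrt (∑ i, ((m i : ℝ))^2)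

/-- `M_q^t(m) = Σ_{β ∈ ℤ^d} |m + 2^q β|^{-2t}`; terms with `m + 2^q β = 0` vanish
since `0^{-2t} = 0` for the real power with `-2t ≠ 0`, which encodes the omission
of the `β`-term producing `0` in the definition from the paper. -/
noncomputable def Mq (d q : ℕ) (t : ℝ) (m : Fin d → ℤ) : ℝ :=
  ∑' β : Fin d → ℤ, latticeEnorm (fun i => m i + 2^q * β i) ^ (-(2*t))

/-- The box `B_q^d = [-2^{q-1}, 2^{q-1}-1]^d ⊂ ℤ^d`. -/
noncomputable def Bqset (d q : ℕ) : Finset (Fin d → ℤ) :=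
  Fintype.piFinset (fun _ => Finset.Icc (-(2:ℤ)^(q-1)) ((2:ℤ)^(q-1) - 1))
/-- Squared Sobolev norm `‖v‖_t² = Σ_{m≠0} (4π²|m|²)^t |v̂(m)|²`. -/
noncomputable def HtNorm2 {d : ℕ} (t : ℝ) (vhat : (Fin d → ℤ) → ℂ) : ℝ :=
  ∑' m : Fin d → ℤ, (4 * Real.pi^2 * latticeEnorm m ^ 2) ^ t * ‖vhat m‖^2

/-- `g_y(m) = Σ_{j∈J_q} y_j e^{2πi⟨j2^{-q}, m⟩}`. -/
noncomputable def gfun (d q : ℕ) (y : (Fin d → Fin (2^q)) → ℝ) (m : Fin d → ℤ) : ℂ :=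
  ∑ j : Fin d → Fin (2^q), (y j : ℂ) *
    Complex.exp (2 * Real.pi * Complex.I *
      ((∑ i, ((j i : ℝ) / 2^q) * (m i : ℝ) : ℝ) : ℂ))

/-- Fourier coefficients of `w = (−Δ)^{-t} Σ_j y_j δ(·−x_j)`. -/
noncomputable def what (d q : ℕ) (t : ℝ) (y : (Fin d → Fin (2^q)) → ℝ)
    (m : Fin d → ℤ) : ℂ :=
  if m = 0 then 0 else
    (((4 * Real.pi^2) ^ (-t) * latticeEnorm m ^ (-(2*t)) : ℝ) : ℂ) * gfun d q y m

/-- The truncation `w_h` of `w` to frequencies in `B_{q-1}^d`. -/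
noncomputable def whatH (d q : ℕ) (t : ℝ) (y : (Fin d → Fin (2^q)) → ℝ)
    (m : Fin d → ℤ) : ℂ :=
  if m ∈ Bqset d (q-1) then what d q t y m else 0

/-! Outside the box `B_{q-1}^d` write each frequency as `m = r + 2^q β` with `r ∈ B_q^d`
(balanced remainder `Int.bmod`, quotient `Int.bdiv`). Then `g_y(m) = g_y(r)`, and
`|m| ≥ 2^{q-2} max(1, |β_i|)` for every coordinate `i`; multiplying these `d` bounds gives
`|m|^{-2t} ≤ 2^{-2t(q-2)} ∏_i max(1, |β_i|)^{-2t/d}` with `2t/d > 1`. The sum over `β` is then a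
constant, and the sum over `r` is `Σ_{r ∈ B_q^d} |g_y(r)|² = 2^{qd} |y|²` by orthogonality of
the characters `r ↦ e^{2πi⟨j, r⟩/2^q}` on `B_q^d`. -/

theorem abs_le_latticeEnorm {d : ℕ} (m : Fin d → ℤ) (i : Fin d) :
    |(m i : ℝ)| ≤ latticeEnorm m := by
  rw [← Real.sqrt_sq_eq_abs]
  exact Real.sqrt_le_sqrt (Finset.single_le_sum (f := fun i => ((m i : ℝ)) ^ 2)
    (fun _ _ => sq_nonneg _) (Finset.mem_univ i))

theorem latticeEnorm_pos {d : ℕ} {m : Fin d → ℤ} (hm : m ≠ 0) : 0 < latticeEnorm m := by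
  obtain ⟨i, hi⟩ := Function.ne_iff.mp hm
  exact (abs_pos.mpr (Int.cast_ne_zero.mpr hi)).trans_le (abs_le_latticeEnorm m i)

theorem zero_mem_Bqset (d q : ℕ) : (0 : Fin d → ℤ) ∈ Bqset d q :=
  Fintype.mem_piFinset.mpr fun _ => Finset.mem_Icc.mpr
    ⟨by simp, by simpa using one_le_pow₀ (M₀ := ℤ) one_le_two⟩

section Folding

variable {q : ℕ}

theorem natCast_two_pow_eq_two_mul (hq : 1 ≤ q) : (((2 ^ q : ℕ) : ℤ)) = 2 * 2 ^ (q - 1) := by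
  rw [← pow_sub_one_mul (by omega : q ≠ 0)]
  push_cast
  ring

theorem bmod_two_pow_mem_Icc (hq : 1 ≤ q) (b : ℤ) :
    b.bmod (2 ^ q) ∈ Finset.Icc (-(2:ℤ) ^ (q - 1)) (2 ^ (q - 1) - 1) := by
  have hlo := Int.le_bmod (x := b) (m := 2 ^ q) (by positivity)
  have hhi := Int.bmod_lt (x := b) (m := 2 ^ q) (by positivity)
  rw [natCast_two_pow_eq_two_mul hq] at hlo hhi
  rw [Finset.mem_Icc]
  omega

theorem bmod_two_pow_add_mul_bdiv (b : ℤ) : b.bmod (2 ^ q) + 2 ^ q * b.bdiv (2 ^ q) = b := by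
  exact_mod_cast Int.bmod_add_bdiv b (2 ^ q)

theorem two_pow_sub_one_mul_abs_bdiv_le (hq : 1 ≤ q) (b : ℤ) :
    2 ^ (q - 1) * |b.bdiv (2 ^ q)| ≤ |b| := by
  have hr := Finset.mem_Icc.mp (bmod_two_pow_mem_Icc hq b)
  have hN : (2:ℤ) ^ q = 2 * 2 ^ (q - 1) := by exact_mod_cast natCast_two_pow_eq_two_mul hq
  have hb := bmod_two_pow_add_mul_bdiv (q := q) b
  rw [hN] at hb
  set n : ℤ := 2 ^ (q - 1)
  set r := b.bmod (2 ^ q)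
  set β := b.bdiv (2 ^ q)
  have hn : 0 < n := by positivity
  rcases lt_trichotomy β 0 with h | h | h
  · rw [abs_of_neg h, abs_of_neg (by nlinarith)]; nlinarith
  · simp [h]
  · rw [abs_of_pos h, abs_of_pos (by nlinarith)]; nlinarith

end Folding

theorem bmod_bdiv_injective (d q : ℕ) :
    Function.Injective fun m : Fin d → ℤ =>
      ((fun i => (m i).bmod (2 ^ q)), (fun i => (m i).bdiv (2 ^ q))) := by
  intro m m' h
  simp only [Prod.mk.injEq, funext_iff] at h
  funext i
  rw [← bmod_two_pow_add_mul_bdiv (q := q) (m i), ← bmod_two_pow_add_mul_bdiv (q := q) (m' i),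
    h.1 i, h.2 i]

theorem gfun_add_two_pow_mul (d q : ℕ) (y : (Fin d → Fin (2^q)) → ℝ) (m β : Fin d → ℤ) :
    gfun d q y (fun i => m i + 2 ^ q * β i) = gfun d q y m := by
  unfold gfun
  refine Finset.sum_congr rfl fun j _ => ?_
  have hsplit : (∑ i, ((j i : ℝ) / 2 ^ q) * ((m i + 2 ^ q * β i : ℤ) : ℝ))
      = (∑ i, ((j i : ℝ) / 2 ^ q) * (m i : ℝ)) + ((∑ i, (j i : ℤ) * β i : ℤ) : ℝ) := by
    push_cast
    rw [← Finset.sum_add_distrib]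
    refine Finset.sum_congr rfl fun i _ => ?_
    field_simp
  rw [hsplit, Complex.ofReal_add, mul_add, Complex.exp_add, Complex.ofReal_intCast,
    mul_comm _ ((_ : ℤ) : ℂ), Complex.exp_int_mul_two_pi_mul_I, mul_one]

theorem gfun_bmod (d q : ℕ) (y : (Fin d → Fin (2^q)) → ℝ) (m : Fin d → ℤ) :
    gfun d q y (fun i => (m i).bmod (2 ^ q)) = gfun d q y m := by
  conv_rhs => rw [← funext fun i => bmod_two_pow_add_mul_bdiv (q := q) (m i)]
  rw [gfun_add_two_pow_mul]

theorem sum_zpow_Icc_eq_zero {K : Type*} [Field K] {ω : K} {A B : ℤ}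
    (hω : ω ^ (B + 1 - A).toNat = 1) (hω1 : ω ≠ 1) : ∑ b ∈ Finset.Icc A B, ω ^ b = 0 := by
  rw [Int.Icc_eq_finset_map, Finset.sum_map]
  rcases eq_or_ne ω 0 with rfl | hω0
  · rcases Nat.eq_zero_or_pos (B + 1 - A).toNat with hN | hN
    · simp [hN]
    · simp [zero_pow hN.ne'] at hω
  · simp only [Function.Embedding.trans_apply, Nat.castEmbedding_apply, addLeftEmbedding_apply,
      zpow_add₀ hω0, zpow_natCast, ← Finset.mul_sum, geom_sum_eq hω1, hω, sub_self, zero_div,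
      mul_zero]

theorem sum_exp_Icc_two_pow {q : ℕ} (hq : 1 ≤ q) {a : ℤ} (ha : |a| < 2 ^ q) :
    ∑ b ∈ Finset.Icc (-(2:ℤ) ^ (q - 1)) (2 ^ (q - 1) - 1),
      Complex.exp (2 * Real.pi * Complex.I * (a * b / 2 ^ q)) = if a = 0 then 2 ^ q else 0 := by
  have hN : (2 ^ (q - 1) - 1 + 1 - -(2:ℤ) ^ (q - 1)).toNat = 2 ^ q := by
    rw [← Int.toNat_natCast (2 ^ q), natCast_two_pow_eq_two_mul hq]
    ring_nf
  split_ifs with ha0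
  · simp only [ha0, Int.cast_zero, zero_mul, zero_div, mul_zero, Complex.exp_zero,
      Finset.sum_const, Int.card_Icc, hN, nsmul_eq_mul, mul_one, Nat.cast_pow, Nat.cast_ofNat]
  set ω := Complex.exp (2 * Real.pi * Complex.I * (a / 2 ^ q))
  have hterm : ∀ b : ℤ, Complex.exp (2 * Real.pi * Complex.I * (a * b / 2 ^ q)) = ω ^ b := by
    intro b
    rw [← Complex.exp_int_mul]
    ring_nf
  simp_rw [hterm]
  refine sum_zpow_Icc_eq_zero ?_ ?_
  · rw [hN, ← Complex.exp_nat_mul, ← Complex.exp_int_mul_two_pi_mul_I a]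
    congr 1
    push_cast
    field_simp
  · intro h
    obtain ⟨n, hn⟩ := Complex.exp_eq_one_iff.mp h
    have han : (a : ℂ) = n * 2 ^ q := by
      field_simp at hn
      linear_combination hn
    have han' : a = n * 2 ^ q := by exact_mod_cast han
    have : (2:ℤ) ^ q ≤ |a| := by
      rw [han', abs_mul, abs_pow, abs_two]
      refine le_mul_of_one_le_left (by positivity) (Int.one_le_abs ?_)
      rintro rfl
      exact ha0 (by simpa using han')
    omega

open ComplexConjugate in
theorem sum_norm_sq_eq_of_orthogonal {ι κ : Type*} [Fintype ι] [DecidableEq ι] (T : Finset κ)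
    (χ : ι → κ → ℂ) (c : ℝ)
    (horth : ∀ j k, ∑ r ∈ T, χ j r * conj (χ k r) = if j = k then (c : ℂ) else 0) (y : ι → ℂ) :
    ∑ r ∈ T, ‖∑ j, y j * χ j r‖ ^ 2 = c * ∑ j, ‖y j‖ ^ 2 := by
  apply Complex.ofReal_injective
  push_cast
  simp_rw [← Complex.mul_conj', map_sum, map_mul, Finset.sum_mul_sum]
  calc ∑ r ∈ T, ∑ j, ∑ k, y j * χ j r * (conj (y k) * conj (χ k r))
      = ∑ j, ∑ k, y j * conj (y k) * ∑ r ∈ T, χ j r * conj (χ k r) := by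
        rw [Finset.sum_comm]
        refine Finset.sum_congr rfl fun j _ => ?_
        rw [Finset.sum_comm]
        simp_rw [Finset.mul_sum]
        exact Finset.sum_congr rfl fun k _ => Finset.sum_congr rfl fun r _ => by ring
    _ = c * ∑ j, y j * conj (y j) := by
        simp_rw [horth, mul_ite, mul_zero, Finset.sum_ite_eq, Finset.mem_univ, if_true,
          Finset.mul_sum]
        exact Finset.sum_congr rfl fun j _ => by ring

noncomputable def gridChar {d : ℕ} (q : ℕ) (j : Fin d → Fin (2^q)) (m : Fin d → ℤ) : ℂ :=
  Complex.exp (2 * Real.pi * Complex.I * ((∑ i, ((j i : ℝ) / 2^q) * (m i : ℝ) : ℝ) : ℂ))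

open ComplexConjugate in
theorem gridChar_mul_conj {d q : ℕ} (j k : Fin d → Fin (2^q)) (r : Fin d → ℤ) :
    gridChar q j r * conj (gridChar q k r)
      = ∏ i, Complex.exp (2 * Real.pi * Complex.I * (((j i : ℤ) - k i : ℤ) * r i / 2 ^ q)) := by
  rw [gridChar, gridChar, ← Complex.exp_conj, ← Complex.exp_add, ← Complex.exp_sum]
  congr 1
  simp only [map_mul, map_ofNat, Complex.conj_ofReal, Complex.conj_I]
  push_cast
  simp only [Finset.mul_sum, ← Finset.sum_add_distrib]
  refine Finset.sum_congr rfl fun i _ => ?_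
  ring

open ComplexConjugate in
theorem sum_gridChar_mul_conj {d q : ℕ} (hq : 1 ≤ q) (j k : Fin d → Fin (2^q)) :
    ∑ r ∈ Bqset d q, gridChar q j r * conj (gridChar q k r)
      = if j = k then ((((2:ℝ) ^ q) ^ d : ℝ) : ℂ) else 0 := by
  have hcoord : ∀ i, |((j i : ℤ) - k i)| < 2 ^ q := fun i => by
    have hj : ((j i : ℕ) : ℤ) < 2 ^ q := by exact_mod_cast (j i).is_lt
    have hk : ((k i : ℕ) : ℤ) < 2 ^ q := by exact_mod_cast (k i).is_lt
    rw [abs_lt]; constructor <;> omega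
  simp_rw [gridChar_mul_conj]
  rw [Bqset, ← Finset.prod_univ_sum (f := fun i (b : ℤ) =>
    Complex.exp (2 * Real.pi * Complex.I * (((j i : ℤ) - k i : ℤ) * b / 2 ^ q)))]
  simp_rw [fun i => sum_exp_Icc_two_pow hq (hcoord i)]
  rw [Finset.prod_ite_zero]
  by_cases hjk : j = k
  · simp [hjk]
  · rw [if_neg hjk, if_neg]
    intro h
    exact hjk (funext fun i => Fin.ext (by simpa [sub_eq_zero] using h i (Finset.mem_univ i)))

theorem sum_norm_sq_gfun (d q : ℕ) (hq : 1 ≤ q) (y : (Fin d → Fin (2^q)) → ℝ) :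
    ∑ r ∈ Bqset d q, ‖gfun d q y r‖ ^ 2 = ((2:ℝ) ^ q) ^ d * ∑ j, (y j) ^ 2 := by
  show ∑ r ∈ Bqset d q, ‖∑ j, (y j : ℂ) * gridChar q j r‖ ^ 2 = _
  have := sum_norm_sq_eq_of_orthogonal (Bqset d q) (gridChar q) _ (sum_gridChar_mul_conj hq)
    (fun j => (y j : ℂ))
  simpa only [Complex.norm_real, Real.norm_eq_abs, sq_abs] using this

theorem two_pow_div_four_le_latticeEnorm {d q : ℕ} (hq : 1 ≤ q) {m : Fin d → ℤ}
    (hm : m ∉ Bqset d (q - 1)) : (2:ℝ) ^ q / 4 ≤ latticeEnorm m := by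
  obtain ⟨i, hi⟩ : ∃ i, m i ∉ Finset.Icc (-(2:ℤ) ^ (q - 1 - 1)) (2 ^ (q - 1 - 1) - 1) := by
    simpa [Bqset, Fintype.mem_piFinset] using hm
  have hmi : (2:ℤ) ^ (q - 1 - 1) ≤ |m i| := by
    rw [Finset.mem_Icc] at hi
    rw [le_abs']
    omega
  have hpow : (2:ℝ) ^ q ≤ 2 ^ (q - 1 - 1) * 4 := by
    calc (2:ℝ) ^ q ≤ 2 ^ (q - 1 - 1 + 2) := pow_le_pow_right₀ (by norm_num) (by omega)
      _ = 2 ^ (q - 1 - 1) * 4 := by rw [pow_add]; norm_num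
  calc (2:ℝ) ^ q / 4 ≤ 2 ^ (q - 1 - 1) := by linarith
    _ ≤ |(m i : ℝ)| := by exact_mod_cast hmi
    _ ≤ latticeEnorm m := abs_le_latticeEnorm m i

theorem two_pow_div_four_mul_le_latticeEnorm {d q : ℕ} (hq : 1 ≤ q) {m : Fin d → ℤ}
    (hm : m ∉ Bqset d (q - 1)) (i : Fin d) :
    (2:ℝ) ^ q / 4 * max 1 |(((m i).bdiv (2 ^ q) : ℤ) : ℝ)| ≤ latticeEnorm m := by
  have hN : (2:ℝ) ^ q = 2 * 2 ^ (q - 1) := by exact_mod_cast natCast_two_pow_eq_two_mul hq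
  rcases max_cases 1 |(((m i).bdiv (2 ^ q) : ℤ) : ℝ)| with ⟨h, -⟩ | ⟨h, -⟩ <;> rw [h]
  · simpa using two_pow_div_four_le_latticeEnorm hq hm
  · calc (2:ℝ) ^ q / 4 * |(((m i).bdiv (2 ^ q) : ℤ) : ℝ)|
        ≤ 2 ^ (q - 1) * |(((m i).bdiv (2 ^ q) : ℤ) : ℝ)| := by
          gcongr
          rw [hN]
          linarith [pow_pos (two_pos (α := ℝ)) (q - 1)]
      _ ≤ |(m i : ℝ)| := by exact_mod_cast two_pow_sub_one_mul_abs_bdiv_le hq (m i)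
      _ ≤ latticeEnorm m := abs_le_latticeEnorm m i

theorem rpow_neg_le_of_forall_mul_le {ι : Type*} [Fintype ι] [Nonempty ι] {x c s : ℝ}
    {a : ι → ℝ} (hc : 0 < c) (ha : ∀ i, 1 ≤ a i) (hx : ∀ i, c * a i ≤ x) (hs : 0 ≤ s) :
    x ^ (-s) ≤ c ^ (-s) * ∏ i, a i ^ (-(s / Fintype.card ι)) := by
  set n := Fintype.card ι
  have hn : (0:ℝ) < n := by exact_mod_cast Fintype.card_pos
  have ha0 : ∀ i, 0 ≤ a i := fun i => zero_le_one.trans (ha i)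
  have hprod : c ^ n * ∏ i, a i ≤ x ^ n :=
    calc c ^ n * ∏ i, a i = ∏ i, c * a i := by
          rw [Finset.prod_mul_distrib, Finset.prod_const, Finset.card_univ]
      _ ≤ ∏ _i : ι, x := Finset.prod_le_prod (fun i _ => by have := ha0 i; positivity)
          fun i _ => hx i
      _ = x ^ n := by rw [Finset.prod_const, Finset.card_univ]
  have hpos : 0 < c ^ n * ∏ i, a i :=
    mul_pos (by positivity) (Finset.prod_pos fun i _ => one_pos.trans_le (ha i))
  have hx0 : 0 ≤ x := (mul_nonneg hc.le (ha0 (Classical.arbitrary ι))).trans (hx _)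
  calc x ^ (-s) = (x ^ n) ^ (-(s / n)) := by
        rw [← Real.rpow_natCast, ← Real.rpow_mul hx0]
        field_simp
    _ ≤ (c ^ n * ∏ i, a i) ^ (-(s / n)) :=
        Real.rpow_le_rpow_of_nonpos hpos hprod (neg_nonpos.mpr (by positivity))
    _ = c ^ (-s) * ∏ i, a i ^ (-(s / n)) := by
        rw [Real.mul_rpow (by positivity) (Finset.prod_nonneg fun i _ => ha0 i),
          Real.finsetProd_rpow _ _ fun i _ => ha0 i, ← Real.rpow_natCast,
          ← Real.rpow_mul hc.le]
        field_simp

noncomputable def latticeWeight (p : ℝ) (b : ℤ) : ℝ := max 1 |(b : ℝ)| ^ (-p)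

theorem latticeWeight_nonneg (p : ℝ) (b : ℤ) : 0 ≤ latticeWeight p b :=
  Real.rpow_nonneg (zero_le_one.trans (le_max_left _ _)) _

theorem latticeWeight_anti {p p' : ℝ} (h : p ≤ p') (b : ℤ) :
    latticeWeight p' b ≤ latticeWeight p b :=
  Real.rpow_le_rpow_of_exponent_le (le_max_left _ _) (neg_le_neg h)

theorem summable_latticeWeight {p : ℝ} (hp : 1 < p) : Summable (latticeWeight p) := by
  have hupd : latticeWeight p = Function.update (fun b : ℤ => |(b : ℝ)| ^ (-p)) 0 1 := by
    funext b
    rcases eq_or_ne b 0 with rfl | hb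
    · simp [latticeWeight]
    · rw [Function.update_of_ne hb, latticeWeight,
        max_eq_right (by exact_mod_cast Int.one_le_abs hb)]
  rw [hupd]
  exact (Real.summable_abs_int_rpow hp).update 0 1

theorem tsum_latticeWeight_pos {p : ℝ} (hp : 1 < p) : 0 < ∑' b, latticeWeight p b :=
  (summable_latticeWeight hp).tsum_pos (latticeWeight_nonneg p) 0 (by simp [latticeWeight])

theorem sum_prod_le_tsum_pow {ι α : Type*} [Fintype ι] {f : α → ℝ} (hf0 : ∀ a, 0 ≤ f a)
    (hf : Summable f) (S : Finset (ι → α)) :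
    ∑ β ∈ S, ∏ i, f (β i) ≤ (∑' a, f a) ^ Fintype.card ι := by
  classical
  set T : Finset α := Finset.univ.biUnion fun i => S.image (· i)
  have hST : S ⊆ Fintype.piFinset fun _ => T := fun β hβ =>
    Fintype.mem_piFinset.mpr fun i =>
      Finset.mem_biUnion.mpr ⟨i, Finset.mem_univ _, Finset.mem_image_of_mem _ hβ⟩
  calc ∑ β ∈ S, ∏ i, f (β i) ≤ ∑ β ∈ Fintype.piFinset fun _ => T, ∏ i, f (β i) :=
        Finset.sum_le_sum_of_subset_of_nonneg hST fun β _ _ =>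
          Finset.prod_nonneg fun i _ => hf0 _
    _ = ∏ _i : ι, ∑ a ∈ T, f a := (Finset.prod_univ_sum _ _).symm
    _ ≤ ∏ _i : ι, ∑' a, f a :=
        Finset.prod_le_prod (fun _ _ => Finset.sum_nonneg fun a _ => hf0 a)
          fun _ _ => hf.sum_le_tsum T fun a _ => hf0 a
    _ = (∑' a, f a) ^ Fintype.card ι := by rw [Finset.prod_const, Finset.card_univ]

theorem sum_mul_le_of_injOn {ι κ μ : Type*} {F : Finset ι} {T : Finset κ} {ρ : ι → κ}
    {σ : ι → μ} (hρ : ∀ i ∈ F, ρ i ∈ T) (hinj : Set.InjOn (fun i => (ρ i, σ i)) F)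
    {a : κ → ℝ} {c : μ → ℝ} (ha : ∀ r, 0 ≤ a r) (hc : ∀ β, 0 ≤ c β) {B : ℝ}
    (hB : ∀ S : Finset μ, ∑ β ∈ S, c β ≤ B) :
    ∑ i ∈ F, a (ρ i) * c (σ i) ≤ (∑ r ∈ T, a r) * B := by
  classical
  calc ∑ i ∈ F, a (ρ i) * c (σ i)
      = ∑ x ∈ F.image fun i => (ρ i, σ i), a x.1 * c x.2 :=
        (Finset.sum_image (f := fun x => a x.1 * c x.2) hinj).symm
    _ ≤ ∑ x ∈ T ×ˢ F.image σ, a x.1 * c x.2 := by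
        refine Finset.sum_le_sum_of_subset_of_nonneg ?_ fun x _ _ => mul_nonneg (ha _) (hc _)
        simp only [Finset.subset_iff, Finset.mem_image, Finset.mem_product]
        rintro _ ⟨i, hi, rfl⟩
        exact ⟨hρ i hi, i, hi, rfl⟩
    _ = (∑ r ∈ T, a r) * ∑ β ∈ F.image σ, c β := by rw [Finset.sum_product, Finset.sum_mul_sum]
    _ ≤ (∑ r ∈ T, a r) * B := mul_le_mul_of_nonneg_left (hB _) (Finset.sum_nonneg fun r _ => ha r)

theorem sobolevWeight_mul_norm_what_sq_le {d q : ℕ} {t : ℝ} (ht : 0 ≤ t)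
    (y : (Fin d → Fin (2^q)) → ℝ) {m : Fin d → ℤ} (hm : m ≠ 0) :
    (4 * Real.pi ^ 2 * latticeEnorm m ^ 2) ^ t * ‖what d q t y m‖ ^ 2
      ≤ latticeEnorm m ^ (-(2 * t)) * ‖gfun d q y m‖ ^ 2 := by
  have hP : 1 ≤ 4 * Real.pi ^ 2 := by nlinarith [Real.pi_gt_three]
  have hL := latticeEnorm_pos hm
  rw [what, if_neg hm, norm_mul, Complex.norm_real, Real.norm_eq_abs, mul_pow, sq_abs,
    Real.mul_rpow (by positivity) (sq_nonneg _), ← Real.rpow_natCast (latticeEnorm m) 2,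
    ← Real.rpow_mul hL.le, Real.rpow_neg (by positivity), Real.rpow_neg hL.le]
  have hu : 1 ≤ (4 * Real.pi ^ 2) ^ t := Real.one_le_rpow hP ht
  have hv : 0 < latticeEnorm m ^ (2 * t) := Real.rpow_pos_of_pos hL _
  push_cast
  calc (4 * Real.pi ^ 2) ^ t * latticeEnorm m ^ (2 * t)
        * ((((4 * Real.pi ^ 2) ^ t)⁻¹ * (latticeEnorm m ^ (2 * t))⁻¹) ^ 2 * ‖gfun d q y m‖ ^ 2)
      = ((4 * Real.pi ^ 2) ^ t)⁻¹ * ((latticeEnorm m ^ (2 * t))⁻¹ * ‖gfun d q y m‖ ^ 2) := by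
        field_simp
    _ ≤ 1 * ((latticeEnorm m ^ (2 * t))⁻¹ * ‖gfun d q y m‖ ^ 2) := by
        gcongr
        exact inv_le_one_of_one_le₀ hu
    _ = (latticeEnorm m ^ (2 * t))⁻¹ * ‖gfun d q y m‖ ^ 2 := one_mul _

theorem sobolevWeight_mul_norm_what_sub_whatH_sq_le {d q : ℕ} (hq : 1 ≤ q) {t p : ℝ}
    (ht : 0 ≤ t) (hp : p ≤ 2 * t / d) (y : (Fin d → Fin (2^q)) → ℝ) (m : Fin d → ℤ) :
    (4 * Real.pi ^ 2 * latticeEnorm m ^ 2) ^ t * ‖what d q t y m - whatH d q t y m‖ ^ 2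
      ≤ ((2:ℝ) ^ q / 4) ^ (-(2 * t)) * (‖gfun d q y (fun i => (m i).bmod (2 ^ q))‖ ^ 2
          * ∏ i, latticeWeight p ((m i).bdiv (2 ^ q))) := by
  by_cases hm : m ∈ Bqset d (q - 1)
  · rw [whatH, if_pos hm, sub_self, norm_zero, zero_pow two_ne_zero, mul_zero]
    exact mul_nonneg (by positivity) (mul_nonneg (sq_nonneg _)
      (Finset.prod_nonneg fun i _ => latticeWeight_nonneg p _))
  have hm0 : m ≠ 0 := fun h => hm (h ▸ zero_mem_Bqset d (q - 1))
  obtain ⟨i₀, -⟩ := Function.ne_iff.mp hm0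
  have : Nonempty (Fin d) := ⟨i₀⟩
  have hlower : latticeEnorm m ^ (-(2 * t))
      ≤ ((2:ℝ) ^ q / 4) ^ (-(2 * t)) * ∏ i, latticeWeight (2 * t / d) ((m i).bdiv (2 ^ q)) := by
    have h := rpow_neg_le_of_forall_mul_le (by positivity)
      (fun i => le_max_left 1 |(((m i).bdiv (2 ^ q) : ℤ) : ℝ)|)
      (two_pow_div_four_mul_le_latticeEnorm hq hm) (by positivity : 0 ≤ 2 * t)
    rw [Fintype.card_fin] at h
    exact h
  rw [whatH, if_neg hm, sub_zero, gfun_bmod]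
  calc (4 * Real.pi ^ 2 * latticeEnorm m ^ 2) ^ t * ‖what d q t y m‖ ^ 2
      ≤ latticeEnorm m ^ (-(2 * t)) * ‖gfun d q y m‖ ^ 2 :=
        sobolevWeight_mul_norm_what_sq_le ht y hm0
    _ ≤ ((2:ℝ) ^ q / 4) ^ (-(2 * t)) * (∏ i, latticeWeight (2 * t / d) ((m i).bdiv (2 ^ q)))
          * ‖gfun d q y m‖ ^ 2 := mul_le_mul_of_nonneg_right hlower (sq_nonneg _)
    _ ≤ ((2:ℝ) ^ q / 4) ^ (-(2 * t)) * (∏ i, latticeWeight p ((m i).bdiv (2 ^ q)))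
          * ‖gfun d q y m‖ ^ 2 := by
        gcongr with i
        · exact fun i _ => latticeWeight_nonneg _ _
        · exact latticeWeight_anti hp _
    _ = _ := by ring

theorem two_pow_div_four_rpow_mul_le (d q : ℕ) {t δ : ℝ} (ht : t ≤ 1 / δ) :
    ((2:ℝ) ^ q / 4) ^ (-(2 * t)) * ((2:ℝ) ^ q) ^ d
      ≤ 4 ^ (2 / δ) * (2:ℝ) ^ (-(q:ℝ) * (2 * t - d)) := by
  have hsplit : ((2:ℝ) ^ q / 4) ^ (-(2 * t)) * ((2:ℝ) ^ q) ^ d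
      = 4 ^ (2 * t) * (2:ℝ) ^ (-(q:ℝ) * (2 * t - d)) := by
    rw [Real.div_rpow (by positivity) (by norm_num), div_eq_mul_inv,
      ← Real.rpow_neg (by norm_num : (0:ℝ) ≤ 4), neg_neg, ← pow_mul, ← Real.rpow_natCast 2 q,
      ← Real.rpow_mul two_pos.le, ← Real.rpow_natCast 2 (q * d), mul_right_comm, mul_assoc,
      mul_left_comm, ← mul_assoc, ← Real.rpow_add two_pos]
    push_cast
    ring_nf
  rw [hsplit]
  gcongr
  · norm_num
  · linarith [show 2 / δ = 2 * (1 / δ) by ring]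

theorem sum_norm_sq_gfun_bmod_mul_prod_latticeWeight_le {d q : ℕ} (hq : 1 ≤ q) {p : ℝ}
    (hp : 1 < p) (y : (Fin d → Fin (2^q)) → ℝ) (F : Finset (Fin d → ℤ)) :
    ∑ m ∈ F, ‖gfun d q y (fun i => (m i).bmod (2 ^ q))‖ ^ 2
        * ∏ i, latticeWeight p ((m i).bdiv (2 ^ q))
      ≤ ((2:ℝ) ^ q) ^ d * (∑ j, (y j) ^ 2) * (∑' b, latticeWeight p b) ^ d := by
  have hfold := sum_mul_le_of_injOn (F := F) (T := Bqset d q)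
    (ρ := fun m i => (m i).bmod (2 ^ q)) (σ := fun m i => (m i).bdiv (2 ^ q))
    (a := fun r => ‖gfun d q y r‖ ^ 2) (c := fun β => ∏ i, latticeWeight p (β i))
    (fun m _ => Fintype.mem_piFinset.mpr fun i => bmod_two_pow_mem_Icc hq (m i))
    (bmod_bdiv_injective d q).injOn (fun r => sq_nonneg _)
    (fun β => Finset.prod_nonneg fun i _ => latticeWeight_nonneg p _)
    (B := (∑' b, latticeWeight p b) ^ d) fun S => by
      simpa using sum_prod_le_tsum_pow (latticeWeight_nonneg p) (summable_latticeWeight hp) S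
  rwa [sum_norm_sq_gfun d q hq y] at hfold

theorem stmt19 (d : ℕ) (hd : 1 ≤ d) (δ : ℝ) (hδ : 0 < δ) :
    ∃ C : ℝ, 0 < C ∧
      ∀ q : ℕ, 1 ≤ q → ∀ t ∈ Set.Icc ((d:ℝ)/2 + δ) (1/δ),
        ∀ y : (Fin d → Fin (2^q)) → ℝ,
          HtNorm2 t (fun m => what d q t y m - whatH d q t y m) ≤
            C * (2:ℝ) ^ (-(q:ℝ)*(2*t - (d:ℝ))) * ∑ j, (y j)^2 := by
  have hd0 : (0:ℝ) < d := by exact_mod_cast hd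
  set p : ℝ := 1 + 2 * δ / d
  have hp : 1 < p := lt_add_of_pos_right 1 (by positivity)
  set K := ∑' b, latticeWeight p b
  have hK : 0 < K := tsum_latticeWeight_pos hp
  refine ⟨4 ^ (2 / δ) * K ^ d, by positivity, ?_⟩
  rintro q hq t ⟨ht₁, ht₂⟩ y
  have ht : 0 ≤ t := by linarith [div_nonneg hd0.le (zero_le_two (α := ℝ))]
  have hpt : p ≤ 2 * t / d := by
    rw [le_div_iff₀ hd0, add_mul, div_mul_cancel₀ _ hd0.ne']
    linarith
  rw [HtNorm2]
  refine tsum_le_of_sum_le' (by positivity) fun F => ?_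
  calc ∑ m ∈ F, (4 * Real.pi ^ 2 * latticeEnorm m ^ 2) ^ t * ‖what d q t y m - whatH d q t y m‖ ^ 2
      ≤ ∑ m ∈ F, ((2:ℝ) ^ q / 4) ^ (-(2 * t)) * (‖gfun d q y (fun i => (m i).bmod (2 ^ q))‖ ^ 2
          * ∏ i, latticeWeight p ((m i).bdiv (2 ^ q))) :=
        Finset.sum_le_sum fun m _ => sobolevWeight_mul_norm_what_sub_whatH_sq_le hq ht hpt y m
    _ ≤ ((2:ℝ) ^ q / 4) ^ (-(2 * t)) * (((2:ℝ) ^ q) ^ d * (∑ j, (y j) ^ 2) * K ^ d) := by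
        rw [← Finset.mul_sum]
        exact mul_le_mul_of_nonneg_left
          (sum_norm_sq_gfun_bmod_mul_prod_latticeWeight_le hq hp y F) (by positivity)
    _ = ((2:ℝ) ^ q / 4) ^ (-(2 * t)) * ((2:ℝ) ^ q) ^ d * (K ^ d * ∑ j, (y j) ^ 2) := by ring
    _ ≤ 4 ^ (2 / δ) * (2:ℝ) ^ (-(q:ℝ) * (2 * t - d)) * (K ^ d * ∑ j, (y j) ^ 2) :=
        mul_le_mul_of_nonneg_right (two_pow_div_four_rpow_mul_le d q ht₂) (by positivity)
    _ = 4 ^ (2 / δ) * K ^ d * (2:ℝ) ^ (-(q:ℝ) * (2 * t - d)) * ∑ j, (y j) ^ 2 := by ring
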